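/- arXiv:1105.2597 — 5 statements merged into one kernel-verified Lean document; each statement's English description precedes it below -/
import Mathlib

section
/- Let n ≥ 1 and let u be a tempered distribution on ℝⁿ that is supported in the single point set {0}. Then there exist N ∈ ℕ and real constants c_α, indexed by multi-indices α ∈ ℕⁿ with |α| ≤ N, such that u(φ) = Σ_{|α| ≤ N} c_α · (−1)^{|α|} (∂^α φ)(0) for every Schwartz function φ on ℝⁿ; that is, u = Σ_{|α| ≤ N} c_α δ^{(α)} is a finite linear combination of derivatives of the Dirac delta at the origin. -/
open MeasureTheory SchwartzMap

noncomputable section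

/-- `ℝⁿ` as a Euclidean space. -/
abbrev Euc (n : ℕ) : Type := EuclideanSpace ℝ (Fin n)

/-- A tempered distribution on a real normed space `V`: a continuous linear functional on
the Schwartz space `𝓢(V, ℝ)`. -/
abbrev TDist (V : Type) [NormedAddCommGroup V] [NormedSpace ℝ V] : Type :=
  SchwartzMap V ℝ →L[ℝ] ℝ

/-- `u` is supported in the closed set `K`: `u φ = 0` whenever the (closed) support of `φ` is
disjoint from `K`. -/
def SuppIn {V : Type} [NormedAddCommGroup V] [NormedSpace ℝ V]
    (u : TDist V) (K : Set V) : Prop :=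
  ∀ φ : SchwartzMap V ℝ, Disjoint (tsupport φ) K → u φ = 0

/-- The iterated partial derivative `∂^α` on Schwartz functions on `ℝⁿ`,
for a multi-index `α : Fin n → ℕ`. -/
def multiPDeriv (n : ℕ) (α : Fin n → ℕ) :
    SchwartzMap (Euc n) ℝ →L[ℝ] SchwartzMap (Euc n) ℝ :=
  (List.ofFn fun i : Fin n =>
    (LineDeriv.lineDerivOpCLM ℝ (SchwartzMap (Euc n) ℝ) (EuclideanSpace.single i (1 : ℝ))) ^ (α i)).prod

/-!
The continuity of `u` bounds `|u ψ|` by finitely many Schwartz seminorms, which involve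
derivatives of order at most some `N`. If the `N`-jet of `φ` vanishes at `0`, then
`u φ = u (χ(·/ε) φ)` for a bump `χ` equal to `1` near `0`, and Taylor's estimate makes each of
those seminorms of `χ(·/ε) φ` an `O(ε)`; hence `u φ = 0`. Thus `u` vanishes on the common kernel
of the finitely many functionals `φ ↦ ∂^α φ(0)`, `|α| ≤ N`, so it is a linear combination of
them. The `N`-jet is controlled by these partial derivatives because partial derivatives of
Schwartz functions commute.
-/

open LineDeriv Metric Set Filter Topology
open scoped ContDiff

theorem exists_eq_sum_smul_of_forall_apply_eq_zero {𝕜 E ι : Type*} [Field 𝕜] [AddCommGroup E]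
    [Module 𝕜 E] (S : Finset ι) (L : ι → E →ₗ[𝕜] 𝕜) (u : E →ₗ[𝕜] 𝕜)
    (h : ∀ x, (∀ i ∈ S, L i x = 0) → u x = 0) :
    ∃ c : ι → 𝕜, ∑ i ∈ S, c i • L i = u := by
  have hker : ⨅ i : S, LinearMap.ker (L i) ≤ LinearMap.ker u := fun x hx ↦
    h x fun i hi ↦ (Submodule.mem_iInf _).mp hx ⟨i, hi⟩
  refine (Submodule.mem_span_image_finset_iff_exists_fun' 𝕜).mp ?_
  rw [Set.image_eq_range]
  exact mem_span_of_iInf_ker_le_ker hker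

theorem SchwartzMap.commute_lineDerivOpCLM {E F : Type*} [NormedAddCommGroup E] [NormedSpace ℝ E]
    [NormedAddCommGroup F] [NormedSpace ℝ F] (a b : E) :
    Commute (lineDerivOpCLM ℝ 𝓢(E, F) a) (lineDerivOpCLM ℝ 𝓢(E, F) b) := by
  refine ContinuousLinearMap.ext fun φ ↦ SchwartzMap.ext fun x ↦ ?_
  have hsymm : IsSymmSndFDerivAt ℝ φ x :=
    (φ.smooth ⊤).contDiffAt.isSymmSndFDerivAt <| by
      simp only [minSmoothness_of_isRCLikeNormedField]
      exact WithTop.coe_le_coe.mpr le_top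
  have h2 (v w : E) : ∂_{v} (∂_{w} φ) x = iteratedFDeriv ℝ 2 φ x ![v, w] := by
    rw [← iteratedLineDerivOp_eq_iteratedFDeriv, iteratedLineDerivOp_succ_left,
      iteratedLineDerivOp_one]
    rfl
  simpa [h2] using hsymm.iteratedFDeriv_cons

theorem List.prod_ofFn_update_mul {M : Type*} [Monoid M] {k : ℕ} (f : Fin k → M) (j : Fin k)
    (a : M) (ha : ∀ i, Commute a (f i)) :
    (List.ofFn (Function.update f j (a * f j))).prod = a * (List.ofFn f).prod := by
  induction k with
  | zero => exact j.elim0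
  | succ k ih =>
    rw [List.ofFn_succ, List.ofFn_succ, List.prod_cons, List.prod_cons]
    cases j using Fin.cases with
    | zero =>
      simp only [Function.update_self, mul_assoc]
      congr 3
    | succ j =>
      rw [Function.update_of_ne (Fin.succ_ne_zero j).symm,
        ← Function.comp_def (Function.update f j.succ _) Fin.succ,
        Function.update_comp_eq_of_injective _ (Fin.succ_injective k),
        show a * f j.succ = a * (f ∘ Fin.succ) j from rfl, ih (f ∘ Fin.succ) j fun i ↦ ha i.succ,
        ← mul_assoc, ← mul_assoc, (ha 0).eq]
      rfl

section multiPDeriv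

variable {n : ℕ}

theorem multiPDeriv_zero : multiPDeriv n 0 = 1 :=
  List.prod_eq_one fun _ hx ↦ by
    obtain ⟨i, rfl⟩ := List.mem_ofFn.mp hx
    exact pow_zero _

theorem multiPDeriv_add_single (α : Fin n → ℕ) (j : Fin n) :
    multiPDeriv n (α + Pi.single j 1) =
      lineDerivOpCLM ℝ 𝓢(Euc n, ℝ) (EuclideanSpace.single j (1 : ℝ)) * multiPDeriv n α := by
  set D : Fin n → 𝓢(Euc n, ℝ) →L[ℝ] 𝓢(Euc n, ℝ) :=
    fun i ↦ lineDerivOpCLM ℝ 𝓢(Euc n, ℝ) (EuclideanSpace.single i (1 : ℝ))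
  have hpow : (fun i ↦ D i ^ (α + Pi.single j 1 : Fin n → ℕ) i) =
      Function.update (fun i ↦ D i ^ α i) j (D j * D j ^ α j) := by
    funext i
    rcases eq_or_ne i j with rfl | hij
    · simp [pow_succ']
    · simp [hij]
  unfold multiPDeriv
  rw [hpow, List.prod_ofFn_update_mul _ j _ fun i ↦
    (SchwartzMap.commute_lineDerivOpCLM _ _).pow_right _]

theorem exists_iteratedLineDerivOp_eq_multiPDeriv {k : ℕ} (v : Fin k → Fin n) :
    ∃ α : Fin n → ℕ, ∑ i, α i = k ∧ ∀ φ : 𝓢(Euc n, ℝ),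
      ∂^{fun j ↦ EuclideanSpace.single (v j) (1 : ℝ)} φ = multiPDeriv n α φ := by
  induction k with
  | zero => exact ⟨0, by simp, fun φ ↦ by simp [multiPDeriv_zero]⟩
  | succ k ih =>
    obtain ⟨α, hα, hφ⟩ := ih (Fin.tail v)
    refine ⟨α + Pi.single (v 0) 1, by simp [Finset.sum_add_distrib, hα], fun φ ↦ ?_⟩
    rw [iteratedLineDerivOp_succ_left, multiPDeriv_add_single]
    exact congrArg (∂_{EuclideanSpace.single (v 0) (1 : ℝ)}) (hφ φ)

theorem iteratedFDeriv_eq_zero_of_multiPDeriv_eq_zero (φ : 𝓢(Euc n, ℝ)) (k : ℕ)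
    (h : ∀ α : Fin n → ℕ, ∑ i, α i = k → multiPDeriv n α φ 0 = 0) :
    iteratedFDeriv ℝ k φ 0 = 0 := by
  have hbasis : (iteratedFDeriv ℝ k φ 0).toMultilinearMap = 0 := by
    refine Module.Basis.ext_multilinear (fun _ ↦ (EuclideanSpace.basisFun (Fin n) ℝ).toBasis)
      fun v ↦ ?_
    obtain ⟨α, hα, hφ⟩ := exists_iteratedLineDerivOp_eq_multiPDeriv v
    simpa [← SchwartzMap.iteratedLineDerivOp_eq_iteratedFDeriv, hφ] using h α hα
  ext v
  exact congrArg (· v) hbasis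

end multiPDeriv

section Taylor

variable {E F : Type*} [NormedAddCommGroup E] [NormedSpace ℝ E] [NormedAddCommGroup F]
  [NormedSpace ℝ F]

theorem norm_le_mul_norm_of_norm_fderiv_le {g : E → F} (hg : Differentiable ℝ g) (h0 : g 0 = 0)
    {x : E} {C : ℝ} (hC : ∀ y ∈ closedBall (0 : E) ‖x‖, ‖fderiv ℝ g y‖ ≤ C) :
    ‖g x‖ ≤ C * ‖x‖ := by
  simpa [h0] using (convex_closedBall (0 : E) ‖x‖).norm_image_sub_le_of_norm_fderiv_le
    (fun y _ ↦ hg y) hC (mem_closedBall_self (norm_nonneg x)) (by simp)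

theorem exists_norm_iteratedFDeriv_le_pow [ProperSpace E] {f : E → F} (hf : ContDiff ℝ ∞ f)
    {N : ℕ} (h0 : ∀ j ≤ N, iteratedFDeriv ℝ j f 0 = 0) (r : ℝ) :
    ∃ K, 0 ≤ K ∧ ∀ i ≤ N, ∀ x ∈ closedBall (0 : E) r,
      ‖iteratedFDeriv ℝ (N - i) f x‖ ≤ K * ‖x‖ ^ (i + 1) := by
  obtain ⟨K, hK⟩ := (isCompact_closedBall (0 : E) r).exists_bound_of_continuousOn
    (hf.continuous_iteratedFDeriv (m := N + 1) (mod_cast le_top)).continuousOn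
  replace hK := fun y hy ↦ (hK y hy).trans (le_max_left K 0)
  have hdiff (j : ℕ) : Differentiable ℝ (iteratedFDeriv ℝ j f) :=
    hf.differentiable_iteratedFDeriv (mod_cast ENat.natCast_lt_top j)
  have hball {x : E} (hx : x ∈ closedBall (0 : E) r) : closedBall (0 : E) ‖x‖ ⊆ closedBall 0 r :=
    closedBall_subset_closedBall (mem_closedBall_zero_iff.mp hx)
  refine ⟨max K 0, le_max_right K 0, fun i ↦ ?_⟩
  induction i with
  | zero =>
    intro _ x hx
    rw [zero_add, pow_one]
    refine norm_le_mul_norm_of_norm_fderiv_le (hdiff N) (h0 N le_rfl) fun y hy ↦ ?_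
    rw [norm_fderiv_iteratedFDeriv]
    exact hK y (hball hx hy)
  | succ i ih =>
    intro hi x hx
    rw [pow_succ, ← mul_assoc]
    refine norm_le_mul_norm_of_norm_fderiv_le (hdiff _) (h0 _ (Nat.sub_le N _)) fun y hy ↦ ?_
    rw [norm_fderiv_iteratedFDeriv, show N - (i + 1) + 1 = N - i by omega]
    calc ‖iteratedFDeriv ℝ (N - i) f y‖ ≤ max K 0 * ‖y‖ ^ (i + 1) := ih (by omega) y (hball hx hy)
      _ ≤ max K 0 * ‖x‖ ^ (i + 1) := by gcongr; simpa using hy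

end Taylor

section Cutoff

def unitBump (V : Type*) [NormedAddCommGroup V] [NormedSpace ℝ V] [HasContDiffBump V] :
    ContDiffBump (0 : V) :=
  ⟨1, 2, one_pos, one_lt_two⟩

variable {V : Type*} [NormedAddCommGroup V] [NormedSpace ℝ V] [FiniteDimensional ℝ V]

def cutoff (ε : ℝ) (x : V) : ℝ := unitBump V (ε⁻¹ • x)

variable {ε : ℝ}

theorem cutoff_eq_one (hε : 0 < ε) {x : V} (hx : ‖x‖ ≤ ε) : cutoff ε x = 1 :=
  (unitBump V).one_of_mem_closedBall <| by
    simpa [unitBump, norm_smul, abs_of_pos hε, inv_mul_le_one₀ hε] using hx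

theorem cutoff_eq_zero (hε : 0 < ε) {x : V} (hx : 2 * ε ≤ ‖x‖) : cutoff ε x = 0 :=
  (unitBump V).zero_of_le_dist <| by
    rw [mul_comm] at hx
    simpa [unitBump, norm_smul, abs_of_pos hε, le_inv_mul_iff₀ hε] using hx

theorem contDiff_cutoff (ε : ℝ) : ContDiff ℝ ∞ (cutoff ε : V → ℝ) :=
  (unitBump V).contDiff.comp (contDiff_const_smul ε⁻¹)

theorem hasCompactSupport_cutoff (hε : ε ≠ 0) : HasCompactSupport (cutoff ε : V → ℝ) :=
  (unitBump V).hasCompactSupport.comp_smul (inv_ne_zero hε)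

theorem exists_norm_iteratedFDeriv_cutoff_le (i : ℕ) :
    ∃ B, ∀ ε > 0, ∀ x : V, ‖iteratedFDeriv ℝ i (cutoff ε) x‖ ≤ B * ε⁻¹ ^ i := by
  obtain ⟨B, hB⟩ := ((unitBump V).contDiff.continuous_iteratedFDeriv
    (mod_cast le_top)).bounded_above_of_compact_support
      ((unitBump V).hasCompactSupport.iteratedFDeriv (𝕜 := ℝ) i)
  refine ⟨B, fun ε hε x ↦ ?_⟩
  change ‖iteratedFDeriv ℝ i (fun y ↦ unitBump V (ε⁻¹ • y)) x‖ ≤ _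
  rw [iteratedFDeriv_comp_const_smul _ (unitBump V).contDiff, norm_smul, norm_pow, norm_inv,
    Real.norm_of_nonneg hε.le, mul_comm]
  gcongr
  exact hB _

theorem iteratedFDeriv_cutoff_mul_eq_zero (hε : 0 < ε) (f : V → ℝ) (k : ℕ) {x : V}
    (hx : 2 * ε < ‖x‖) : iteratedFDeriv ℝ k (fun y ↦ cutoff ε y * f y) x = 0 := by
  have hzero : (fun y ↦ cutoff ε y * f y) =ᶠ[𝓝 x] 0 := by
    filter_upwards [(isOpen_lt continuous_const continuous_norm).mem_nhds hx] with y hy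
    simp [cutoff_eq_zero hε hy.le]
  simpa using (hzero.iteratedFDeriv ℝ k).eq_of_nhds

theorem exists_norm_iteratedFDeriv_cutoff_mul_le {f : V → ℝ} (hf : ContDiff ℝ ∞ f) {k : ℕ}
    (h0 : ∀ j ≤ k, iteratedFDeriv ℝ j f 0 = 0) :
    ∃ C, ∀ ε ∈ Ioc (0 : ℝ) 1, ∀ x : V, ‖x‖ ≤ 2 * ε →
      ‖iteratedFDeriv ℝ k (fun y ↦ cutoff ε y * f y) x‖ ≤ C * ε := by
  choose B hB using exists_norm_iteratedFDeriv_cutoff_le (V := V)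
  obtain ⟨K, hK0, hK⟩ := exists_norm_iteratedFDeriv_le_pow hf h0 2
  refine ⟨∑ i ∈ Finset.range (k + 1), k.choose i * (B i * (K * 2 ^ (i + 1))),
    fun ε ⟨hε, hε1⟩ x hx ↦ ?_⟩
  have hx2 : x ∈ closedBall (0 : V) 2 := mem_closedBall_zero_iff.mpr (by linarith)
  calc ‖iteratedFDeriv ℝ k (fun y ↦ cutoff ε y * f y) x‖
      ≤ ∑ i ∈ Finset.range (k + 1),
          k.choose i * ‖iteratedFDeriv ℝ i (cutoff ε) x‖ * ‖iteratedFDeriv ℝ (k - i) f x‖ :=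
        norm_iteratedFDeriv_mul_le (contDiff_cutoff ε) hf x (mod_cast le_top)
    _ ≤ ∑ i ∈ Finset.range (k + 1),
          k.choose i * (B i * ε⁻¹ ^ i) * (K * (2 * ε) ^ (i + 1)) := by
        refine Finset.sum_le_sum fun i hi ↦ ?_
        have hχ := hB i ε hε x
        have hf' : ‖iteratedFDeriv ℝ (k - i) f x‖ ≤ K * (2 * ε) ^ (i + 1) :=
          (hK i (by simpa [Nat.lt_succ_iff] using hi) x hx2).trans (by gcongr)
        exact mul_le_mul (by gcongr) hf' (norm_nonneg _)
          (mul_nonneg (Nat.cast_nonneg _) ((norm_nonneg _).trans hχ))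
    _ = (∑ i ∈ Finset.range (k + 1), k.choose i * (B i * (K * 2 ^ (i + 1)))) * ε := by
        rw [Finset.sum_mul]
        refine Finset.sum_congr rfl fun i _ ↦ ?_
        rw [inv_pow]
        field_simp
        ring

theorem coe_smulLeftCLM_cutoff (hε : ε ≠ 0) (φ : 𝓢(V, ℝ)) :
    ⇑(smulLeftCLM ℝ (cutoff ε) φ) = fun y ↦ cutoff ε y * φ y :=
  smulLeftCLM_apply ((hasCompactSupport_cutoff hε).hasTemperateGrowth (contDiff_cutoff ε)) φ

theorem tendsto_seminorm_smulLeftCLM_cutoff (φ : 𝓢(V, ℝ)) (m k : ℕ)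
    (h0 : ∀ j ≤ k, iteratedFDeriv ℝ j φ 0 = 0) :
    Tendsto (fun ε ↦ SchwartzMap.seminorm ℝ m k (smulLeftCLM ℝ (cutoff ε) φ)) (𝓝[>] 0) (𝓝 0) := by
  obtain ⟨C, hC⟩ := exists_norm_iteratedFDeriv_cutoff_mul_le (φ.smooth ⊤) h0
  have hbound : ∀ ε ∈ Ioc (0 : ℝ) 1,
      SchwartzMap.seminorm ℝ m k (smulLeftCLM ℝ (cutoff ε) φ) ≤ 2 ^ m * C * ε := by
    rintro ε ⟨hε, hε1⟩
    have hC0 : 0 ≤ C * ε := (norm_nonneg _).trans (hC ε ⟨hε, hε1⟩ 0 (by simp; positivity))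
    refine seminorm_le_bound ℝ m k _ (by rw [mul_assoc]; positivity) fun x ↦ ?_
    rw [coe_smulLeftCLM_cutoff hε.ne']
    rcases le_or_gt ‖x‖ (2 * ε) with hx | hx
    · rw [mul_assoc]
      exact mul_le_mul (pow_le_pow_left₀ (norm_nonneg x) (by linarith) m)
        (hC ε ⟨hε, hε1⟩ x hx) (norm_nonneg _) (by positivity)
    · rw [iteratedFDeriv_cutoff_mul_eq_zero hε _ k hx, norm_zero, mul_zero, mul_assoc]
      positivity
  exact squeeze_zero' (Eventually.of_forall fun _ ↦ apply_nonneg _ _)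
    (mem_of_superset (Ioc_mem_nhdsGT one_pos) hbound)
    (((continuous_const_mul (2 ^ m * C)).tendsto' 0 0 (mul_zero _)).mono_left nhdsWithin_le_nhds)

end Cutoff

section FiniteOrder

variable {V : Type} [NormedAddCommGroup V] [NormedSpace ℝ V] [FiniteDimensional ℝ V]

theorem SuppIn.apply_smulLeftCLM_cutoff {u : TDist V} (hu : SuppIn u {0}) (φ : 𝓢(V, ℝ))
    {ε : ℝ} (hε : 0 < ε) : u (smulLeftCLM ℝ (cutoff ε) φ) = u φ := by
  have hvanish : ⇑(φ - smulLeftCLM ℝ (cutoff ε) φ) =ᶠ[𝓝 0] 0 := by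
    filter_upwards [closedBall_mem_nhds (0 : V) hε] with y hy
    simp [coe_smulLeftCLM_cutoff hε.ne', cutoff_eq_one hε (mem_closedBall_zero_iff.mp hy)]
  have h := hu _ (disjoint_singleton_right.mpr (notMem_tsupport_iff_eventuallyEq.mpr hvanish))
  rw [map_sub, sub_eq_zero] at h
  exact h.symm

theorem SuppIn.exists_apply_eq_zero_of_iteratedFDeriv_eq_zero {u : TDist V} (hu : SuppIn u {0}) :
    ∃ N : ℕ, ∀ φ : 𝓢(V, ℝ), (∀ k ≤ N, iteratedFDeriv ℝ k φ 0 = 0) → u φ = 0 := by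
  obtain ⟨s, C, -, hC⟩ := Seminorm.bound_of_continuous (schwartz_withSeminorms ℝ V ℝ)
    ((normSeminorm ℝ ℝ).comp u.toLinearMap) (continuous_norm.comp u.continuous)
  refine ⟨s.sup Prod.snd, fun φ hφ ↦ ?_⟩
  have hlim : Tendsto (fun ε ↦ C * ∑ q ∈ s, SchwartzMap.seminorm ℝ q.1 q.2
      (smulLeftCLM ℝ (cutoff ε) φ)) (𝓝[>] 0) (𝓝 0) := by
    simpa using (tendsto_finsetSum s fun q hq ↦ tendsto_seminorm_smulLeftCLM_cutoff φ q.1 q.2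
      fun j hj ↦ hφ j (hj.trans (Finset.le_sup hq))).const_mul (C : ℝ)
  have hle (ε : ℝ) (hε : 0 < ε) :
      ‖u φ‖ ≤ C * ∑ q ∈ s, SchwartzMap.seminorm ℝ q.1 q.2 (smulLeftCLM ℝ (cutoff ε) φ) := by
    rw [← hu.apply_smulLeftCLM_cutoff φ hε]
    calc ‖u (smulLeftCLM ℝ (cutoff ε) φ)‖
        ≤ C * s.sup (schwartzSeminormFamily ℝ V ℝ) (smulLeftCLM ℝ (cutoff ε) φ) := hC _
      _ ≤ C * ∑ q ∈ s, SchwartzMap.seminorm ℝ q.1 q.2 (smulLeftCLM ℝ (cutoff ε) φ) := by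
          gcongr
          exact (Seminorm.finset_sup_le_sum _ s _).trans_eq (by simp; rfl)
  exact norm_le_zero_iff.mp (ge_of_tendsto hlim (eventually_nhdsWithin_of_forall hle))

end FiniteOrder

def diracDeriv (n : ℕ) (α : Fin n → ℕ) : TDist (Euc n) :=
  (-1 : ℝ) ^ (∑ i, α i) • ((BoundedContinuousFunction.evalCLM ℝ (0 : Euc n)).comp
    (toBoundedContinuousFunctionCLM ℝ (Euc n) ℝ)).comp (multiPDeriv n α)

theorem diracDeriv_apply (n : ℕ) (α : Fin n → ℕ) (φ : 𝓢(Euc n, ℝ)) :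
    diracDeriv n α φ = (-1 : ℝ) ^ (∑ i, α i) * multiPDeriv n α φ 0 :=
  rfl

theorem dist_supported_at_origin_general (n : ℕ) (u : TDist (Euc n))
    (hu : SuppIn u ({0} : Set (Euc n))) :
    ∃ (N : ℕ) (c : (Fin n → ℕ) → ℝ), ∀ φ : SchwartzMap (Euc n) ℝ,
      u φ = ∑ α ∈ Finset.univ.filter
          (fun α : Fin n → Fin (N + 1) => (∑ i, (α i : ℕ)) ≤ N),
        c (fun i => (α i : ℕ)) * (-1 : ℝ) ^ (∑ i, (α i : ℕ)) *
          (multiPDeriv n (fun i => (α i : ℕ)) φ) 0 := by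
  obtain ⟨N, hN⟩ := hu.exists_apply_eq_zero_of_iteratedFDeriv_eq_zero
  set S := Finset.univ.filter fun α : Fin n → Fin (N + 1) => (∑ i, (α i : ℕ)) ≤ N
  have hker (φ : 𝓢(Euc n, ℝ)) (hφ : ∀ α ∈ S, diracDeriv n (fun i ↦ α i) φ = 0) : u φ = 0 := by
    refine hN φ fun k hk ↦ iteratedFDeriv_eq_zero_of_multiPDeriv_eq_zero φ k fun β hβ ↦ ?_
    have hβN : ∑ i, β i ≤ N := hβ.trans_le hk
    have hlt (i : Fin n) : β i < N + 1 :=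
      Nat.lt_succ_of_le ((Finset.single_le_sum (by simp) (Finset.mem_univ i)).trans hβN)
    simpa [diracDeriv_apply] using hφ (fun i ↦ ⟨β i, hlt i⟩) (by simpa [S] using hβN)
  obtain ⟨c, hc⟩ := exists_eq_sum_smul_of_forall_apply_eq_zero S
    (fun α ↦ (diracDeriv n fun i ↦ α i).toLinearMap) u.toLinearMap hker
  refine ⟨N, fun β ↦ c fun i ↦ Fin.ofNat (N + 1) (β i), fun φ ↦ ?_⟩
  simp [S, ← ContinuousLinearMap.coe_coe u, ← hc, diracDeriv_apply, mul_assoc]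

/-- **Distributions supported at a point.** Any tempered distribution `u` on `ℝⁿ` (`n ≥ 1`)
supported in `{0}` is a finite linear combination of derivatives of the Dirac delta at `0`:
there are `N` and constants `c_α` (`|α| ≤ N`) with
`u φ = ∑_{|α| ≤ N} c_α (-1)^{|α|} (∂^α φ)(0)` for all Schwartz `φ`. -/
theorem dist_supported_at_origin (n : ℕ) (hn : 1 ≤ n) (u : TDist (Euc n))
    (hu : SuppIn u ({0} : Set (Euc n))) :
    ∃ (N : ℕ) (c : (Fin n → ℕ) → ℝ), ∀ φ : SchwartzMap (Euc n) ℝ,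
      u φ = ∑ α ∈ Finset.univ.filter
          (fun α : Fin n → Fin (N + 1) => (∑ i, (α i : ℕ)) ≤ N),
        c (fun i => (α i : ℕ)) * (-1 : ℝ) ^ (∑ i, (α i : ℕ)) *
          (multiPDeriv n (fun i => (α i : ℕ)) φ) 0 :=
  dist_supported_at_origin_general n u hu
end
end

section
/- Every tempered distribution u on ℝ has a tempered primitive: there exists a tempered distribution v on ℝ such that v(φ′) = −u(φ) for every Schwartz function φ on ℝ, i.e. the distributional derivative of v equals u. -/
/-!
Every Schwartz seminorm of `φ` is bounded by finitely many Schwartz seminorms of `φ'`: the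
derivative raises the order of differentiation by one, and for the order-zero seminorms the
fundamental theorem of calculus, `φ x = -∫_{t > x} φ' t` (or `∫_{t ≤ x} φ' t` when `x ≤ 0`),
gives `|x|^k |φ x| ≤ ∫ |t|^k |φ' t| dt`. Hence `φ' ↦ -u φ` is a well-defined linear functional on
the range of the derivative, dominated by a continuous seminorm, and Hahn–Banach extends it to a
tempered distribution.
-/

open MeasureTheory SchwartzMap

open Filter Set Topology

theorem Module.Dual.exists_strongDual_comp_eq_of_norm_le_seminorm {𝕜 E F : Type*}
    [NormedField 𝕜] [IsRCLikeNormedField 𝕜] [AddCommGroup E] [Module 𝕜 E] [AddCommGroup F]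
    [Module 𝕜 F] [TopologicalSpace F] [PolynormableSpace 𝕜 F] (T : E →ₗ[𝕜] F)
    (u : Module.Dual 𝕜 E) {q : Seminorm 𝕜 F} (hq : Continuous q) (hu : ∀ x, ‖u x‖ ≤ q (T x)) :
    ∃ v : StrongDual 𝕜 F, ∀ x, v (T x) = u x := by
  have hker : LinearMap.ker T ≤ LinearMap.ker u := fun x hx => by
    simpa [LinearMap.mem_ker.mp hx] using hu x
  let f : Module.Dual 𝕜 (LinearMap.range T) :=
    (LinearMap.ker T).liftQ u hker ∘ₗ T.quotKerEquivRange.symm.toLinearMap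
  have hf : ∀ x, f ⟨T x, LinearMap.mem_range_self T x⟩ = u x := fun x => by
    simp [f, LinearMap.quotKerEquivRange_symm_apply_image]
  obtain ⟨v, hv, -⟩ := f.exists_continuous_extension_of_le_seminorm _ hq fun ⟨_, x, rfl⟩ =>
    hf x ▸ hu x
  exact ⟨v, fun x => (hv _).trans (hf x)⟩

theorem pow_mul_norm_setIntegral_le_integral_pow_mul_norm {E F : Type*} [NormedAddCommGroup E]
    [MeasurableSpace E] [NormedAddCommGroup F] [NormedSpace ℝ F] {μ : Measure E} {g : E → F}
    {k : ℕ} (hg : Integrable (fun t => ‖t‖ ^ k * ‖g t‖) μ) {s : Set E} (hs : MeasurableSet s)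
    {x : E} (hx : ∀ t ∈ s, ‖x‖ ≤ ‖t‖) :
    ‖x‖ ^ k * ‖∫ t in s, g t ∂μ‖ ≤ ∫ t, ‖t‖ ^ k * ‖g t‖ ∂μ :=
  calc ‖x‖ ^ k * ‖∫ t in s, g t ∂μ‖
      ≤ ‖x‖ ^ k * ∫ t in s, ‖g t‖ ∂μ := by gcongr; exact norm_integral_le_integral_norm _
    _ = ∫ t in s, ‖x‖ ^ k * ‖g t‖ ∂μ := (integral_const_mul _ _).symm
    _ ≤ ∫ t in s, ‖t‖ ^ k * ‖g t‖ ∂μ :=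
      integral_mono_of_nonneg (.of_forall fun _ => by positivity) hg.integrableOn
        (ae_restrict_of_forall_mem hs fun t ht => by dsimp only; gcongr; exact hx t ht)
    _ ≤ ∫ t, ‖t‖ ^ k * ‖g t‖ ∂μ := setIntegral_le_integral hg (.of_forall fun _ => by positivity)

namespace SchwartzMap

variable {𝕜 F : Type*} [RCLike 𝕜] [NormedAddCommGroup F] [NormedSpace ℝ F] [NormedSpace 𝕜 F]

theorem tendsto_atTop (f : 𝓢(ℝ, F)) : Tendsto f atTop (𝓝 0) :=
  f.tendsto_cocompact.mono_left atTop_le_cocompact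

theorem tendsto_atBot (f : 𝓢(ℝ, F)) : Tendsto f atBot (𝓝 0) :=
  f.tendsto_cocompact.mono_left atBot_le_cocompact

theorem pow_mul_norm_le_integral_pow_mul_norm_deriv [CompleteSpace F] (f : 𝓢(ℝ, F)) (k : ℕ)
    (x : ℝ) : ‖x‖ ^ k * ‖f x‖ ≤ ∫ t, ‖t‖ ^ k * ‖deriv f t‖ := by
  have hmoment := (derivCLM ℝ F f).integrable_pow_mul volume k
  have hderiv : Integrable (deriv f) := (derivCLM ℝ F f).integrable
  rcases le_total 0 x with hx | hx
  · have hf : f x = -∫ t in Ioi x, deriv f t := by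
      rw [integral_Ioi_of_hasDerivAt_of_tendsto' (fun t _ => f.hasDerivAt t) hderiv.integrableOn
        f.tendsto_atTop, zero_sub, neg_neg]
    rw [hf, norm_neg]
    refine pow_mul_norm_setIntegral_le_integral_pow_mul_norm hmoment measurableSet_Ioi fun t ht => ?_
    rw [Real.norm_of_nonneg hx, Real.norm_of_nonneg (hx.trans (le_of_lt ht))]
    exact le_of_lt ht
  · have hf : f x = ∫ t in Iic x, deriv f t := by
      rw [integral_Iic_of_hasDerivAt_of_tendsto' (fun t _ => f.hasDerivAt t) hderiv.integrableOn
        f.tendsto_atBot, sub_zero]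
    rw [hf]
    refine pow_mul_norm_setIntegral_le_integral_pow_mul_norm hmoment measurableSet_Iic fun t ht => ?_
    rw [Real.norm_of_nonpos hx, Real.norm_of_nonpos ((show t ≤ x from ht).trans hx)]
    exact neg_le_neg ht

variable [SMulCommClass ℝ 𝕜 F]

theorem seminorm_zero_le_derivCLM [CompleteSpace F] (k : ℕ) (f : 𝓢(ℝ, F)) :
    SchwartzMap.seminorm 𝕜 k 0 f ≤ 2 ^ (volume : Measure ℝ).integrablePower *
      (∫ x : ℝ, (1 + ‖x‖) ^ (-((volume : Measure ℝ).integrablePower : ℝ))) *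
      (SchwartzMap.seminorm 𝕜 0 0 (derivCLM 𝕜 F f) +
        SchwartzMap.seminorm 𝕜 (k + (volume : Measure ℝ).integrablePower) 0 (derivCLM 𝕜 F f)) := by
  refine seminorm_le_bound 𝕜 k 0 f (by positivity) fun x => ?_
  rw [norm_iteratedFDeriv_zero]
  exact (f.pow_mul_norm_le_integral_pow_mul_norm_deriv k x).trans
    (integral_pow_mul_le_of_le_of_pow_mul_le ((derivCLM 𝕜 F f).norm_le_seminorm 𝕜)
      ((derivCLM 𝕜 F f).norm_pow_mul_le_seminorm 𝕜 _))

theorem seminorm_succ_le_derivCLM (k n : ℕ) (f : 𝓢(ℝ, F)) :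
    SchwartzMap.seminorm 𝕜 k (n + 1) f ≤ SchwartzMap.seminorm 𝕜 k n (derivCLM 𝕜 F f) :=
  seminorm_le_bound' 𝕜 k (n + 1) f (apply_nonneg _ _) fun x => by
    rw [iteratedDeriv_succ']
    exact (derivCLM 𝕜 F f).le_seminorm' 𝕜 k n x

variable [CompleteSpace F]

theorem exists_seminorm_le_derivCLM (k n : ℕ) : ∃ (s : Finset (ℕ × ℕ)) (C : ℝ), ∀ f : 𝓢(ℝ, F),
    SchwartzMap.seminorm 𝕜 k n f ≤ C * s.sup (schwartzSeminormFamily 𝕜 ℝ F) (derivCLM 𝕜 F f) := by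
  cases n with
  | zero =>
    set N := (volume : Measure ℝ).integrablePower
    set A := 2 ^ N * ∫ x : ℝ, (1 + ‖x‖) ^ (-(N : ℝ))
    let s : Finset (ℕ × ℕ) := {(0, 0), (k + N, 0)}
    refine ⟨s, 2 * A, fun f => ?_⟩
    have h₁ := Seminorm.le_finset_sup_apply (p := schwartzSeminormFamily 𝕜 ℝ F)
      (x := derivCLM 𝕜 F f) (s := s) (i := (0, 0)) (by simp [s])
    have h₂ := Seminorm.le_finset_sup_apply (p := schwartzSeminormFamily 𝕜 ℝ F)
      (x := derivCLM 𝕜 F f) (s := s) (i := (k + N, 0)) (by simp [s])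
    simp only [schwartzSeminormFamily_apply] at h₁ h₂
    calc _ ≤ _ := seminorm_zero_le_derivCLM k f
      _ ≤ A * (2 * s.sup (schwartzSeminormFamily 𝕜 ℝ F) (derivCLM 𝕜 F f)) :=
        mul_le_mul_of_nonneg_left (by linarith) (by positivity)
      _ = _ := by ring
  | succ n =>
    refine ⟨{(k, n)}, 1, fun f => ?_⟩
    simpa using seminorm_succ_le_derivCLM k n f

theorem exists_finset_sup_le_derivCLM (s' : Finset (ℕ × ℕ)) :
    ∃ (C : NNReal) (s : Finset (ℕ × ℕ)), s'.sup (schwartzSeminormFamily 𝕜 ℝ F) ≤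
      C • (s.sup (schwartzSeminormFamily 𝕜 ℝ F)).comp (derivCLM 𝕜 F).toLinearMap := by
  have hbdd : Seminorm.IsBounded ((schwartzSeminormFamily 𝕜 ℝ F).comp (derivCLM 𝕜 F).toLinearMap)
      (schwartzSeminormFamily 𝕜 ℝ F) LinearMap.id :=
    .of_real fun ⟨k, n⟩ => by
      obtain ⟨s, C, h⟩ := exists_seminorm_le_derivCLM (𝕜 := 𝕜) (F := F) k n
      exact ⟨s, C, fun f => by simpa [← SeminormFamily.finset_sup_comp] using h f⟩
  obtain ⟨C, s, h⟩ := Seminorm.isBounded_sup hbdd s'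
  exact ⟨C, s, by rwa [← SeminormFamily.finset_sup_comp, Seminorm.comp_id] at h⟩

end SchwartzMap

/-- Every tempered distribution `u` on `ℝ` has a tempered primitive: a tempered
distribution `v` with `v(φ') = -u(φ)` for every Schwartz `φ`, i.e. `v' = u`
distributionally. -/
theorem tempered_primitive_exists (u : TDist ℝ) :
    ∃ v : TDist ℝ, ∀ φ : SchwartzMap ℝ ℝ, v (SchwartzMap.derivCLM ℝ ℝ φ) = -(u φ) := by
  have hS := schwartz_withSeminorms ℝ ℝ ℝ
  obtain ⟨s', C, -, hu⟩ := Seminorm.bound_of_continuous hS ((normSeminorm ℝ ℝ).comp u.toLinearMap)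
    (continuous_norm.comp u.continuous)
  obtain ⟨D, s, hs⟩ := SchwartzMap.exists_finset_sup_le_derivCLM (𝕜 := ℝ) (F := ℝ) s'
  have hq : Continuous ((C * D) • s.sup (schwartzSeminormFamily ℝ ℝ ℝ)) :=
    (Seminorm.continuous_finsetSup fun i _ => hS.continuous_seminorm i).const_smul _
  refine Module.Dual.exists_strongDual_comp_eq_of_norm_le_seminorm (derivCLM ℝ ℝ).toLinearMap
    (-u.toLinearMap) hq fun φ => ?_
  calc ‖(-u.toLinearMap) φ‖ = ‖u φ‖ := by simp
    _ ≤ C * s'.sup (schwartzSeminormFamily ℝ ℝ ℝ) φ := hu φ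
    _ ≤ C * (D * s.sup (schwartzSeminormFamily ℝ ℝ ℝ) (derivCLM ℝ ℝ φ)) := by gcongr; exact hs φ
    _ = _ := by simp [NNReal.smul_def, mul_assoc]
end

section
/- Let a ∈ ℝ and let u be a tempered distribution on ℝ supported in the half-line [a, ∞). Then u has a tempered primitive with the same support constraint: there exists a tempered distribution v on ℝ, supported in [a, ∞), such that v(φ′) = −u(φ) for every Schwartz function φ on ℝ. -/
open MeasureTheory SchwartzMap

noncomputable section

/-!
Fix `χ ∈ 𝓢(ℝ)` with `∫ χ = 1` vanishing on `(a - 1, ∞)`. The map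
`I f (x) = ∫_{-∞}^x (f - (∫ f) χ)` is a continuous linear operator on `𝓢(ℝ)`: the integrand has
mean zero, so `I f` also equals `-∫_x^∞ (f - (∫ f) χ)` and decays at both ends, while the
derivatives of `I f` are those of `f - (∫ f) χ`. Since `∫ φ' = 0`, `I φ' = φ`, so `v = -u ∘ I`
is a primitive of `u`. A test function whose support misses `[a, ∞)` vanishes on some `(b, ∞)`
with `a - 1 ≤ b < a`; then so does its image under `I`, which `u` therefore kills.
-/

open Set Filter Topology
open scoped ContDiff

theorem disjoint_tsupport_Ici_iff {M : Type*} [Zero M] {f : ℝ → M} {a : ℝ} :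
    Disjoint (tsupport f) (Ici a) ↔ ∃ b < a, EqOn f 0 (Ioi b) := by
  constructor
  · intro h
    have ha : (tsupport f)ᶜ ∈ 𝓝 a :=
      (isClosed_tsupport f).isOpen_compl.mem_nhds (h.subset_compl_left (mem_Ici.2 le_rfl))
    obtain ⟨l, r, ⟨hla, har⟩, hlr⟩ := mem_nhds_iff_exists_Ioo_subset.1 ha
    refine ⟨l, hla, fun x hlx => image_eq_zero_of_notMem_tsupport ?_⟩
    rcases lt_or_ge x r with hxr | hrx
    · exact hlr ⟨hlx, hxr⟩
    · exact h.subset_compl_left (mem_Ici.2 (har.trans_le hrx).le)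
  · rintro ⟨b, hba, hb⟩
    have hsupp : tsupport f ⊆ Iic b :=
      closure_minimal (fun x hx => mem_Iic.2 (not_lt.1 fun hbx => hx (hb hbx))) isClosed_Iic
    exact (Iic_disjoint_Ici.2 (not_le.2 hba)).mono_left hsupp

theorem SchwartzMap.exists_integral_eq_one_eqOn_Ioi (b : ℝ) :
    ∃ χ : 𝓢(ℝ, ℝ), ∫ x, χ x = 1 ∧ EqOn χ 0 (Ioi b) := by
  let φ : ContDiffBump (b - 1) := ⟨1 / 2, 1, by norm_num, by norm_num⟩
  refine ⟨φ.hasCompactSupport_normed.toSchwartzMap φ.contDiff_normed, φ.integral_normed,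
    fun x hx => Function.notMem_support.1 ?_⟩
  change x ∉ Function.support (φ.normed volume)
  rw [φ.support_normed_eq, Metric.mem_ball, Real.dist_eq, abs_lt]
  exact fun h => (mem_Ioi.1 hx).not_gt (by linarith [h.2, show φ.rOut = 1 from rfl])

variable {E : Type*} [NormedAddCommGroup E] [NormedSpace ℝ E]

theorem hasDerivAt_integral_Iic [CompleteSpace E] {g : ℝ → E} (hg : Integrable g)
    (hgc : Continuous g) (x : ℝ) : HasDerivAt (fun y => ∫ t in Iic y, g t) (g x) x := by
  have hsplit : (fun y => ∫ t in Iic y, g t) =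
      fun y => (∫ t in Iic 0, g t) + ∫ t in 0..y, g t := by
    funext y
    rw [← intervalIntegral.integral_Iic_sub_Iic hg.integrableOn hg.integrableOn, add_sub_cancel]
  rw [hsplit]
  exact (intervalIntegral.integral_hasDerivAt_right hg.intervalIntegrable
    (hgc.stronglyMeasurableAtFilter _ _) hgc.continuousAt).const_add _

theorem integral_Iic_eq_neg_integral_Ioi {g : ℝ → E} (hg : Integrable g) (h₀ : ∫ t, g t = 0)
    (x : ℝ) : ∫ t in Iic x, g t = -∫ t in Ioi x, g t := by
  rw [eq_neg_iff_add_eq_zero, intervalIntegral.integral_Iic_add_Ioi hg.integrableOn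
    hg.integrableOn, h₀]

theorem norm_pow_mul_norm_setIntegral_le {D : Type*} [NormedAddCommGroup D] [MeasurableSpace D]
    {μ : Measure D} {g : D → E} (hg : Integrable g μ)
    {k : ℕ} (hgk : Integrable (fun t => ‖t‖ ^ k * ‖g t‖) μ) {x : D} {s : Set D}
    (hs : MeasurableSet s) (hxs : ∀ t ∈ s, ‖x‖ ≤ ‖t‖) :
    ‖x‖ ^ k * ‖∫ t in s, g t ∂μ‖ ≤ ∫ t, ‖t‖ ^ k * ‖g t‖ ∂μ :=
  calc ‖x‖ ^ k * ‖∫ t in s, g t ∂μ‖ ≤ ‖x‖ ^ k * ∫ t in s, ‖g t‖ ∂μ := by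
        gcongr; exact norm_integral_le_integral_norm _
    _ = ∫ t in s, ‖x‖ ^ k * ‖g t‖ ∂μ := (integral_const_mul _ _).symm
    _ ≤ ∫ t in s, ‖t‖ ^ k * ‖g t‖ ∂μ :=
        setIntegral_mono_on (hg.norm.const_mul _).integrableOn hgk.integrableOn hs
          fun t ht => by gcongr; exact hxs t ht
    _ ≤ ∫ t, ‖t‖ ^ k * ‖g t‖ ∂μ :=
        setIntegral_le_integral hgk (Eventually.of_forall fun t => by positivity)

namespace SchwartzMap

theorem exists_sup_seminorm_comp_le {D F D' F' : Type*} [NormedAddCommGroup D] [NormedSpace ℝ D]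
    [NormedAddCommGroup F] [NormedSpace ℝ F] [NormedAddCommGroup D'] [NormedSpace ℝ D']
    [NormedAddCommGroup F'] [NormedSpace ℝ F'] (T : 𝓢(D, F) →L[ℝ] 𝓢(D', F'))
    (s : Finset (ℕ × ℕ)) :
    ∃ (s' : Finset (ℕ × ℕ)) (C : ℝ), 0 ≤ C ∧ ∀ f, s.sup (schwartzSeminormFamily ℝ D' F') (T f) ≤
      C * s'.sup (schwartzSeminormFamily ℝ D F) f := by
  obtain ⟨s', C, -, hC⟩ := Seminorm.bound_of_continuous (schwartz_withSeminorms ℝ D F)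
    ((s.sup (schwartzSeminormFamily ℝ D' F')).comp T.toLinearMap)
    ((Seminorm.continuous_finsetSup fun i _ =>
      (schwartz_withSeminorms ℝ D' F').continuous_seminorm i).comp T.continuous)
  exact ⟨s', C, C.2, fun f => hC f⟩

theorem norm_pow_mul_norm_integral_Iic_le (g : 𝓢(ℝ, E)) (h₀ : ∫ t, g t = 0) (k : ℕ) (x : ℝ) :
    ‖x‖ ^ k * ‖∫ t in Iic x, g t‖ ≤ ∫ t, ‖t‖ ^ k * ‖g t‖ := by
  rcases le_total x 0 with hx | hx
  · refine norm_pow_mul_norm_setIntegral_le g.integrable (g.integrable_pow_mul volume k)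
      measurableSet_Iic fun t ht => ?_
    simp only [Real.norm_eq_abs, abs_of_nonpos hx, abs_of_nonpos ((mem_Iic.1 ht).trans hx)]
    linarith [mem_Iic.1 ht]
  · rw [integral_Iic_eq_neg_integral_Ioi g.integrable h₀, norm_neg]
    refine norm_pow_mul_norm_setIntegral_le g.integrable (g.integrable_pow_mul volume k)
      measurableSet_Ioi fun t ht => ?_
    simp only [Real.norm_eq_abs, abs_of_nonneg hx, abs_of_nonneg (hx.trans (mem_Ioi.1 ht).le)]
    exact (mem_Ioi.1 ht).le

theorem deriv_integral_Iic [CompleteSpace E] (g : 𝓢(ℝ, E)) :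
    deriv (fun y => ∫ t in Iic y, g t) = g :=
  funext fun x => (hasDerivAt_integral_Iic g.integrable g.continuous x).deriv

theorem contDiff_integral_Iic [CompleteSpace E] (g : 𝓢(ℝ, E)) :
    ContDiff ℝ ∞ (fun y => ∫ t in Iic y, g t) :=
  contDiff_infty_iff_deriv.2
    ⟨fun x => (hasDerivAt_integral_Iic g.integrable g.continuous x).differentiableAt,
      by rw [deriv_integral_Iic]; exact g.smooth ⊤⟩

theorem exists_bound_iteratedFDeriv_integral_Iic [CompleteSpace E] (k n : ℕ) :
    ∃ (s : Finset (ℕ × ℕ)) (C : ℝ), 0 ≤ C ∧ ∀ g : 𝓢(ℝ, E), ∫ t, g t = 0 → ∀ x : ℝ,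
      ‖x‖ ^ k * ‖iteratedFDeriv ℝ n (fun y => ∫ t in Iic y, g t) x‖ ≤
        C * s.sup (schwartzSeminormFamily ℝ ℝ E) g := by
  cases n with
  | zero =>
    set p := (volume : Measure ℝ).integrablePower
    let s : Finset (ℕ × ℕ) := {(0, 0), (k + p, 0)}
    have hI : 0 ≤ ∫ x : ℝ, (1 + ‖x‖) ^ (-(p : ℝ)) :=
      integral_nonneg fun x => Real.rpow_nonneg (by positivity) _
    refine ⟨s, 2 ^ p * (∫ x : ℝ, (1 + ‖x‖) ^ (-(p : ℝ))) * 2, by positivity, fun g h₀ x => ?_⟩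
    have hmoment := integral_pow_mul_iteratedFDeriv_le ℝ volume g k 0
    have h₁ : schwartzSeminormFamily ℝ ℝ E (0, 0) g ≤ s.sup (schwartzSeminormFamily ℝ ℝ E) g :=
      Seminorm.le_finset_sup_apply (Finset.mem_insert_self _ _)
    have h₂ : schwartzSeminormFamily ℝ ℝ E (k + p, 0) g ≤ s.sup (schwartzSeminormFamily ℝ ℝ E) g :=
      Seminorm.le_finset_sup_apply (Finset.mem_insert_of_mem (Finset.mem_singleton_self _))
    simp only [schwartzSeminormFamily_apply] at h₁ h₂
    simp only [norm_iteratedFDeriv_zero] at hmoment ⊢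
    refine (norm_pow_mul_norm_integral_Iic_le g h₀ k x).trans (hmoment.trans ?_)
    rw [mul_assoc _ 2]
    exact mul_le_mul_of_nonneg_left (by linarith) (by positivity)
  | succ m =>
    refine ⟨{(k, m)}, 1, zero_le_one, fun g _ x => ?_⟩
    rw [norm_iteratedFDeriv_eq_norm_iteratedDeriv, iteratedDeriv_succ', deriv_integral_Iic,
      ← norm_iteratedFDeriv_eq_norm_iteratedDeriv, Finset.sup_singleton, one_mul]
    exact le_seminorm ℝ k m g x

variable (χ : 𝓢(ℝ, ℝ))

def subIntegralSMulCLM : 𝓢(ℝ, ℝ) →L[ℝ] 𝓢(ℝ, ℝ) :=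
  ContinuousLinearMap.id ℝ _ - (integralCLM ℝ volume).smulRight χ

theorem subIntegralSMulCLM_apply (f : 𝓢(ℝ, ℝ)) (x : ℝ) :
    subIntegralSMulCLM χ f x = f x - (∫ t, f t) * χ x := by
  simp [subIntegralSMulCLM]

variable {χ} in
theorem integral_subIntegralSMulCLM (hχ : ∫ x, χ x = 1) (f : 𝓢(ℝ, ℝ)) :
    ∫ x, subIntegralSMulCLM χ f x = 0 := by
  simp_rw [subIntegralSMulCLM_apply]
  rw [integral_sub f.integrable (χ.integrable.const_mul _), integral_const_mul, hχ, mul_one,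
    sub_self]

def primitiveCLM (hχ : ∫ x, χ x = 1) : 𝓢(ℝ, ℝ) →L[ℝ] 𝓢(ℝ, ℝ) :=
  mkCLM (fun f x => ∫ t in Iic x, subIntegralSMulCLM χ f t)
    (fun f g x => by
      simp only [map_add, add_apply]
      exact integral_add (subIntegralSMulCLM χ f).integrable.integrableOn
        (subIntegralSMulCLM χ g).integrable.integrableOn)
    (fun c f x => by
      simp only [map_smul, smul_apply]
      exact integral_smul c _)
    (fun f => contDiff_integral_Iic _)
    (fun ⟨k, n⟩ => by
      obtain ⟨s, C, hC, hbound⟩ := exists_bound_iteratedFDeriv_integral_Iic (E := ℝ) k n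
      obtain ⟨s', C', hC', hcomp⟩ := exists_sup_seminorm_comp_le (subIntegralSMulCLM χ) s
      refine ⟨s', C * C', mul_nonneg hC hC', fun f x => ?_⟩
      calc _ ≤ C * s.sup (schwartzSeminormFamily ℝ ℝ ℝ) (subIntegralSMulCLM χ f) :=
            hbound _ (integral_subIntegralSMulCLM hχ f) x
        _ ≤ C * (C' * s'.sup (schwartzSeminormFamily ℝ ℝ ℝ) f) := by gcongr; exact hcomp f
        _ = _ := (mul_assoc _ _ _).symm)

variable (hχ : ∫ x, χ x = 1)

theorem primitiveCLM_apply (f : 𝓢(ℝ, ℝ)) (x : ℝ) :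
    primitiveCLM χ hχ f x = ∫ t in Iic x, subIntegralSMulCLM χ f t := rfl

theorem primitiveCLM_derivCLM (φ : 𝓢(ℝ, ℝ)) : primitiveCLM χ hχ (derivCLM ℝ ℝ φ) = φ := by
  ext x
  have h₀ : ∫ t, derivCLM ℝ ℝ φ t = 0 :=
    integral_eq_zero_of_hasDerivAt_of_integrable (fun t => φ.hasDerivAt t)
      (derivCLM ℝ ℝ φ).integrable φ.integrable
  simp only [primitiveCLM_apply, subIntegralSMulCLM_apply, h₀, zero_mul, sub_zero]
  simpa using integral_Iic_of_hasDerivAt_of_tendsto' (fun t _ => φ.hasDerivAt t)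
    (derivCLM ℝ ℝ φ).integrable.integrableOn (φ.tendsto_cocompact.mono_left atBot_le_cocompact)

theorem primitiveCLM_eqOn_Ioi {f : 𝓢(ℝ, ℝ)} {b : ℝ} (hf : EqOn f 0 (Ioi b))
    (hχb : EqOn χ 0 (Ioi b)) : EqOn (primitiveCLM χ hχ f) 0 (Ioi b) := by
  intro x hx
  rw [primitiveCLM_apply, integral_Iic_eq_neg_integral_Ioi (subIntegralSMulCLM χ f).integrable
    (integral_subIntegralSMulCLM hχ f), Pi.zero_apply, neg_eq_zero]
  refine setIntegral_eq_zero_of_forall_eq_zero fun t ht => ?_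
  have hbt : b < t := (mem_Ioi.1 hx).trans ht
  simp [subIntegralSMulCLM_apply, hf hbt, hχb hbt]

end SchwartzMap

/-- A tempered distribution on `ℝ` supported in `[a, ∞)` has a tempered primitive also
supported in `[a, ∞)`. -/
theorem tempered_primitive_exists_supported (a : ℝ) (u : TDist ℝ)
    (hu : SuppIn u (Set.Ici a)) :
    ∃ v : TDist ℝ, SuppIn v (Set.Ici a) ∧
      ∀ φ : SchwartzMap ℝ ℝ, v (SchwartzMap.derivCLM ℝ ℝ φ) = -(u φ) := by
  obtain ⟨χ, hχ, hχa⟩ := exists_integral_eq_one_eqOn_Ioi (a - 1)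
  refine ⟨-(u.comp (primitiveCLM χ hχ)), fun φ hφ => ?_, fun φ => ?_⟩
  · obtain ⟨b, hba, hb⟩ := disjoint_tsupport_Ici_iff.1 hφ
    have hprim : EqOn (primitiveCLM χ hχ φ) 0 (Ioi (max b (a - 1))) :=
      primitiveCLM_eqOn_Ioi χ hχ (hb.mono (Ioi_subset_Ioi (le_max_left _ _)))
        (hχa.mono (Ioi_subset_Ioi (le_max_right _ _)))
    have hvanish := hu _ (disjoint_tsupport_Ici_iff.2 ⟨_, max_lt hba (by linarith), hprim⟩)
    simp [hvanish]
  · simp [primitiveCLM_derivCLM]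
end
end

section
/- Let n ≥ 1, let a ∈ ℝ with a ≠ 0, and let u be a tempered distribution on ℝⁿ supported in {0} that is homogeneous with scaling exponent a, i.e. u( x ↦ φ(t·x) ) = t^a · u(φ) for every t > 0 and every Schwartz function φ. Then u is a sum of first derivatives of distributions supported at the origin: there exist tempered distributions v₁, …, vₙ on ℝⁿ, each supported in {0}, such that u = Σ_{i=1}^{n} ∂ᵢvᵢ. -/
open MeasureTheory SchwartzMap

noncomputable section

/-- The distributional directional derivative along `e`: `(∂ₑ u)(φ) = -u(∂ₑ φ)`. -/
def dirDeriv {V : Type} [NormedAddCommGroup V] [NormedSpace ℝ V] (e : V) (u : TDist V) :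
    TDist V :=
  -(u.comp (LineDeriv.lineDerivOpCLM ℝ (SchwartzMap V ℝ) e))

/-- The distributional partial derivative `∂ᵢ u` on `ℝⁿ`. -/
def pDeriv (n : ℕ) (i : Fin n) (u : TDist (Euc n)) : TDist (Euc n) :=
  dirDeriv (EuclideanSpace.single i (1 : ℝ)) u

/-- Dilation by `t > 0` on Schwartz space: `(dilateCLM t ht φ) x = φ (t • x)`. -/
def dilateCLM {V : Type} [NormedAddCommGroup V] [NormedSpace ℝ V] (t : ℝ) (ht : 0 < t) :
    SchwartzMap V ℝ →L[ℝ] SchwartzMap V ℝ :=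
  SchwartzMap.compCLM (g := fun x : V => t • x) ℝ
    ((t • ContinuousLinearMap.id ℝ V).hasTemperateGrowth)
    ⟨1, 1 / t, fun x => by
      have h : ‖t • x‖ = t * ‖x‖ := by
        rw [norm_smul, Real.norm_eq_abs, abs_of_pos ht]
      rw [pow_one, h, one_div_mul_eq_div, le_div_iff₀ ht]
      nlinarith [norm_nonneg x]⟩

/-!
Averaging dilations gives the radial Taylor formula
`φ x - φ (t • x) = ∑ i, x i * ∫ s in t..1, ∂ᵢφ (s • x)`, and for `0 < t ≤ 1` the averaging
operator `A ψ = ∫ s in t..1, ψ (s • ·)` is continuous on Schwartz space and preserves vanishing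
near the origin. Applying `u` and homogeneity with `t = 1/2` gives
`(1 - t ^ a) u φ = ∑ i, u (x i • A (∂ᵢφ))`, and `t ^ a ≠ 1` because `a ≠ 0`; hence
`u = ∑ i, ∂ᵢ vᵢ` with `vᵢ = -(1 - t ^ a)⁻¹ • u (x i • A ·)`, which is supported at the origin.
-/

open Set
open scoped Interval ContDiff

theorem ContinuousMultilinearMap.intervalIntegral_apply {ι : Type*} [Fintype ι]
    {M : ι → Type*} [∀ i, NormedAddCommGroup (M i)] [∀ i, NormedSpace ℝ (M i)]
    {E : Type*} [NormedAddCommGroup E] [NormedSpace ℝ E]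
    {φ : ℝ → ContinuousMultilinearMap ℝ M E} {a b : ℝ}
    (hφ : IntervalIntegrable φ volume a b) (m : ∀ i, M i) :
    (∫ s in a..b, φ s) m = ∫ s in a..b, φ s m := by
  simp_rw [intervalIntegral.intervalIntegral_eq_integral_uIoc,
    ← ContinuousMultilinearMap.integral_apply hφ.def' m, smul_apply]

theorem EuclideanSpace.hasTemperateGrowth_apply {n : ℕ} (i : Fin n) :
    (fun x : EuclideanSpace ℝ (Fin n) ↦ x i).HasTemperateGrowth :=
  (EuclideanSpace.proj (𝕜 := ℝ) i).hasTemperateGrowth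

namespace SchwartzMap

variable {V F : Type*} [NormedAddCommGroup V] [NormedSpace ℝ V]
  [NormedAddCommGroup F] [NormedSpace ℝ F]

theorem hasFDerivAt_iteratedFDeriv (ψ : 𝓢(V, F)) (m : ℕ) (x : V) :
    HasFDerivAt (iteratedFDeriv ℝ m ψ) (iteratedFDeriv ℝ (m + 1) ψ x).curryLeft x :=
  (((ψ.smooth ⊤).differentiable_iteratedFDeriv (mod_cast ENat.natCast_lt_top m)) x).hasFDerivAt

theorem continuous_comp_smul (ψ : 𝓢(V, F)) (x : V) : Continuous fun s : ℝ ↦ ψ (s • x) := by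
  fun_prop

theorem continuous_fderiv_comp_smul_apply (ψ : 𝓢(V, F)) (x v : V) :
    Continuous fun s : ℝ ↦ fderiv ℝ ψ (s • x) v := by
  have := (ψ.smooth ⊤).continuous_fderiv (by simp)
  fun_prop

theorem continuous_pow_smul_iteratedFDeriv_smul (ψ : 𝓢(V, F)) (m : ℕ) (x : V) :
    Continuous fun s : ℝ ↦ s ^ m • iteratedFDeriv ℝ m ψ (s • x) := by
  have := (ψ.smooth ⊤).continuous_iteratedFDeriv (m := m) (mod_cast le_top)
  fun_prop

theorem hasFDerivAt_pow_smul_iteratedFDeriv_smul (ψ : 𝓢(V, F)) (m : ℕ) (s : ℝ) (x : V) :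
    HasFDerivAt (fun x ↦ s ^ m • iteratedFDeriv ℝ m ψ (s • x))
      (s ^ (m + 1) • iteratedFDeriv ℝ (m + 1) ψ (s • x)).curryLeft x := by
  refine (((hasFDerivAt_iteratedFDeriv ψ m (s • x)).comp x
    ((hasFDerivAt_id x).const_smul s)).const_smul (s ^ m)).congr_fderiv ?_
  ext y w
  simp [pow_succ, mul_smul]

theorem hasFDerivAt_intervalIntegral_pow_smul_iteratedFDeriv_smul (ψ : 𝓢(V, F)) (m : ℕ)
    (a b : ℝ) (x₀ : V) :
    HasFDerivAt (fun x ↦ ∫ s in a..b, s ^ m • iteratedFDeriv ℝ m ψ (s • x))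
      (∫ s in a..b, s ^ (m + 1) • iteratedFDeriv ℝ (m + 1) ψ (s • x₀)).curryLeft x₀ := by
  let F' : V → ℝ → V →L[ℝ] V [×m]→L[ℝ] F :=
    fun x s ↦ (s ^ (m + 1) • iteratedFDeriv ℝ (m + 1) ψ (s • x)).curryLeft
  have hF'_cont : ∀ x, Continuous (F' x) := fun x ↦
    (continuousMultilinearCurryLeftEquiv ℝ _ F).continuous.comp
      (continuous_pow_smul_iteratedFDeriv_smul ψ (m + 1) x)
  -- not found by instance search: this topology is built from the non-metric topology
  -- instance of `ContinuousMultilinearMap`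
  let _ : TopologicalSpace.PseudoMetrizableSpace
      (V →L[ℝ] V [×m]→L[ℝ] F) :=
    @PseudoEMetricSpace.pseudoMetrizableSpace (V →L[ℝ] V [×m]→L[ℝ] F) _
  have key := intervalIntegral.hasFDerivAt_integral_of_dominated_of_fderiv_le
    (bound := fun s ↦ |s| ^ (m + 1) * SchwartzMap.seminorm ℝ 0 (m + 1) ψ) (F' := F')
    (μ := volume) (x₀ := x₀) (a := a) (b := b) Filter.univ_mem
    (.of_forall fun x ↦ (continuous_pow_smul_iteratedFDeriv_smul ψ m x).aestronglyMeasurable)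
    ((continuous_pow_smul_iteratedFDeriv_smul ψ m x₀).intervalIntegrable _ _)
    (hF'_cont x₀).aestronglyMeasurable
    (.of_forall fun s _ x _ ↦ ?_) (Continuous.intervalIntegrable (by fun_prop) _ _)
    (.of_forall fun s _ x _ ↦ hasFDerivAt_pow_smul_iteratedFDeriv_smul ψ m s x)
  · have hcoeff : ∫ s in a..b, F' x₀ s =
        (∫ s in a..b, s ^ (m + 1) • iteratedFDeriv ℝ (m + 1) ψ (s • x₀)).curryLeft := by
      ext y w
      have hF'y : Continuous fun s ↦ F' x₀ s y :=
        (ContinuousLinearMap.apply ℝ _ y).continuous.comp (hF'_cont x₀)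
      rw [ContinuousLinearMap.intervalIntegral_apply ((hF'_cont x₀).intervalIntegrable _ _) y,
        ContinuousMultilinearMap.intervalIntegral_apply (hF'y.intervalIntegrable _ _) w,
        ContinuousMultilinearMap.curryLeft_apply, ContinuousMultilinearMap.intervalIntegral_apply
          ((continuous_pow_smul_iteratedFDeriv_smul ψ (m + 1) x₀).intervalIntegrable _ _)]
      rfl
    rwa [hcoeff] at key
  · rw [ContinuousMultilinearMap.curryLeft_norm, norm_smul, norm_pow, Real.norm_eq_abs]
    gcongr
    exact ψ.norm_iteratedFDeriv_le_seminorm ℝ _ _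

theorem hasFTaylorSeriesUpTo_intervalIntegral_comp_smul (ψ : 𝓢(V, F)) (a b : ℝ) :
    HasFTaylorSeriesUpTo ∞ (fun x ↦ ∫ s in a..b, ψ (s • x))
      (fun x m ↦ ∫ s in a..b, s ^ m • iteratedFDeriv ℝ m ψ (s • x)) := by
  refine ⟨fun x ↦ ?_, fun m _ x ↦ ?_, fun m _ ↦ continuous_iff_continuousAt.2 fun x ↦ ?_⟩
  · rw [ContinuousMultilinearMap.curry0_apply, ContinuousMultilinearMap.intervalIntegral_apply
      ((continuous_pow_smul_iteratedFDeriv_smul ψ 0 x).intervalIntegrable _ _)]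
    simp
  · exact hasFDerivAt_intervalIntegral_pow_smul_iteratedFDeriv_smul ψ m a b x
  · exact (hasFDerivAt_intervalIntegral_pow_smul_iteratedFDeriv_smul ψ m a b x).continuousAt

theorem iteratedFDeriv_intervalIntegral_comp_smul (ψ : 𝓢(V, F)) (a b : ℝ) (m : ℕ) (x : V) :
    iteratedFDeriv ℝ m (fun x ↦ ∫ s in a..b, ψ (s • x)) x =
      ∫ s in a..b, s ^ m • iteratedFDeriv ℝ m ψ (s • x) :=
  ((hasFTaylorSeriesUpTo_intervalIntegral_comp_smul ψ a b).eq_iteratedFDeriv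
    (mod_cast le_top) x).symm

theorem norm_pow_mul_norm_iteratedFDeriv_intervalIntegral_comp_smul_le (ψ : 𝓢(V, F)) {t : ℝ}
    (ht₀ : 0 < t) (ht₁ : t ≤ 1) (k m : ℕ) (x : V) :
    ‖x‖ ^ k * ‖iteratedFDeriv ℝ m (fun x ↦ ∫ s in t..1, ψ (s • x)) x‖ ≤
      t⁻¹ ^ k * SchwartzMap.seminorm ℝ k m ψ := by
  have hbound : ∀ s ∈ Ι t 1, ‖‖x‖ ^ k • s ^ m • iteratedFDeriv ℝ m ψ (s • x)‖ ≤
      t⁻¹ ^ k * SchwartzMap.seminorm ℝ k m ψ := by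
    intro s hs
    rw [uIoc_of_le ht₁] at hs
    have hs₀ : 0 < s := ht₀.trans hs.1
    have hx : ‖x‖ ≤ t⁻¹ * ‖s • x‖ := by
      rw [norm_smul, Real.norm_of_nonneg hs₀.le, ← div_eq_inv_mul, le_div_iff₀ ht₀, mul_comm]
      gcongr
      exact hs.1.le
    calc ‖‖x‖ ^ k • s ^ m • iteratedFDeriv ℝ m ψ (s • x)‖
        = ‖x‖ ^ k * s ^ m * ‖iteratedFDeriv ℝ m ψ (s • x)‖ := by
          rw [norm_smul, norm_smul, norm_pow, norm_pow, norm_norm, Real.norm_of_nonneg hs₀.le,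
            mul_assoc]
      _ ≤ (t⁻¹ * ‖s • x‖) ^ k * 1 * ‖iteratedFDeriv ℝ m ψ (s • x)‖ := by
          gcongr
          exact pow_le_one₀ hs₀.le hs.2
      _ = t⁻¹ ^ k * (‖s • x‖ ^ k * ‖iteratedFDeriv ℝ m ψ (s • x)‖) := by ring
      _ ≤ t⁻¹ ^ k * SchwartzMap.seminorm ℝ k m ψ := by
          gcongr
          exact ψ.le_seminorm ℝ k m (s • x)
  calc ‖x‖ ^ k * ‖iteratedFDeriv ℝ m (fun x ↦ ∫ s in t..1, ψ (s • x)) x‖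
      = ‖∫ s in t..1, ‖x‖ ^ k • s ^ m • iteratedFDeriv ℝ m ψ (s • x)‖ := by
        rw [iteratedFDeriv_intervalIntegral_comp_smul, intervalIntegral.integral_smul, norm_smul,
          norm_pow, norm_norm]
    _ ≤ t⁻¹ ^ k * SchwartzMap.seminorm ℝ k m ψ * |1 - t| :=
        intervalIntegral.norm_integral_le_of_norm_le_const hbound
    _ ≤ t⁻¹ ^ k * SchwartzMap.seminorm ℝ k m ψ := by
        refine mul_le_of_le_one_right (by positivity) ?_
        rw [abs_le]
        constructor <;> linarith

def dilateAverageCLM (t : ℝ) (ht₀ : 0 < t) (ht₁ : t ≤ 1) : 𝓢(V, F) →L[ℝ] 𝓢(V, F) :=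
  mkCLM (fun ψ x ↦ ∫ s in t..1, ψ (s • x))
    (fun ψ φ x ↦ intervalIntegral.integral_add ((continuous_comp_smul ψ x).intervalIntegrable _ _)
      ((continuous_comp_smul φ x).intervalIntegrable _ _))
    (fun c ψ x ↦ intervalIntegral.integral_smul c _)
    (fun ψ ↦ (hasFTaylorSeriesUpTo_intervalIntegral_comp_smul ψ t 1).contDiff)
    (fun ⟨k, m⟩ ↦ ⟨{(k, m)}, t⁻¹ ^ k, by positivity, fun ψ x ↦ by
      simpa only [Finset.sup_singleton, schwartzSeminormFamily_apply] using
        norm_pow_mul_norm_iteratedFDeriv_intervalIntegral_comp_smul_le ψ ht₀ ht₁ k m x⟩)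

@[simp]
theorem dilateAverageCLM_apply {t : ℝ} (ht₀ : 0 < t) (ht₁ : t ≤ 1) (ψ : 𝓢(V, F)) (x : V) :
    dilateAverageCLM t ht₀ ht₁ ψ x = ∫ s in t..1, ψ (s • x) :=
  rfl

theorem zero_notMem_tsupport_dilateAverageCLM {t : ℝ} (ht₀ : 0 < t) (ht₁ : t ≤ 1)
    {ψ : 𝓢(V, F)} (hψ : 0 ∉ tsupport ψ) : 0 ∉ tsupport (dilateAverageCLM t ht₀ ht₁ ψ) := by
  rw [notMem_tsupport_iff_eventuallyEq] at hψ ⊢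
  obtain ⟨ε, hε, hψε⟩ := Metric.eventually_nhds_iff_ball.1 hψ
  filter_upwards [Metric.ball_mem_nhds 0 hε] with y hy
  rw [dilateAverageCLM_apply, Pi.zero_apply]
  refine (intervalIntegral.integral_congr fun s hs ↦ hψε _ ?_).trans intervalIntegral.integral_zero
  rw [uIcc_of_le ht₁] at hs
  rw [mem_ball_zero_iff, norm_smul, Real.norm_of_nonneg (ht₀.le.trans hs.1)] at *
  exact (mul_le_of_le_one_left (norm_nonneg y) hs.2).trans_lt hy

variable [CompleteSpace F]

theorem sub_comp_smul_eq_intervalIntegral_fderiv (φ : 𝓢(V, F)) (t : ℝ) (x : V) :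
    φ x - φ (t • x) = ∫ s in t..1, fderiv ℝ φ (s • x) x := by
  have hderiv : ∀ s : ℝ, HasDerivAt (fun s : ℝ ↦ φ (s • x)) (fderiv ℝ φ (s • x) x) s := fun s ↦
    φ.differentiableAt.hasFDerivAt.comp_hasDerivAt s (by simpa using (hasDerivAt_id s).smul_const x)
  rw [intervalIntegral.integral_eq_sub_of_hasDerivAt (fun s _ ↦ hderiv s)
    ((φ.continuous_fderiv_comp_smul_apply x x).intervalIntegrable _ _), one_smul]

end SchwartzMap

open LineDeriv in
theorem sub_dilateCLM_eq_sum_coord_smul_dilateAverageCLM {n : ℕ} (t : ℝ) (ht₀ : 0 < t)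
    (ht₁ : t ≤ 1) (φ : 𝓢(Euc n, ℝ)) :
    φ - dilateCLM t ht₀ φ = ∑ i, smulLeftCLM ℝ (fun x : Euc n ↦ x i)
      (dilateAverageCLM t ht₀ ht₁ (∂_{EuclideanSpace.single i (1 : ℝ)} φ)) := by
  ext x
  simp only [sub_apply, sum_apply, dilateAverageCLM_apply, lineDerivOp_apply_eq_fderiv,
    smulLeftCLM_apply_apply (EuclideanSpace.hasTemperateGrowth_apply _)]
  have hexpand : ∀ L : Euc n →L[ℝ] ℝ, L x = ∑ i, x i • L (EuclideanSpace.single i 1) := by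
    intro L
    simp_rw [← map_smul, ← map_sum]
    congr
    simpa using ((EuclideanSpace.basisFun (Fin n) ℝ).sum_repr x).symm
  change φ x - φ (t • x) = _
  simp_rw [φ.sub_comp_smul_eq_intervalIntegral_fderiv, hexpand (fderiv ℝ φ _),
    ← intervalIntegral.integral_smul]
  exact intervalIntegral.integral_finsetSum fun i _ ↦
    ((φ.continuous_fderiv_comp_smul_apply x _).const_smul (x i)).intervalIntegrable _ _

theorem SuppIn.comp_smulLeftCLM_coord_dilateAverageCLM {n : ℕ} {u : TDist (Euc n)}
    (hu : SuppIn u {0}) (i : Fin n) {t : ℝ} (ht₀ : 0 < t) (ht₁ : t ≤ 1) :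
    SuppIn (u ∘L smulLeftCLM ℝ (fun x : Euc n ↦ x i) ∘L dilateAverageCLM t ht₀ ht₁) {0} := by
  intro ψ hψ
  rw [disjoint_singleton_right] at hψ
  refine hu (smulLeftCLM ℝ (fun x : Euc n ↦ x i) (dilateAverageCLM t ht₀ ht₁ ψ))
    (disjoint_singleton_right.2 fun h0 ↦ ?_)
  rw [smulLeftCLM_apply (EuclideanSpace.hasTemperateGrowth_apply i)] at h0
  exact zero_notMem_tsupport_dilateAverageCLM ht₀ ht₁ hψ (tsupport_smul_subset_right _ _ h0)

theorem homogeneous_dist_at_origin_is_exact_general (n : ℕ) (a : ℝ) (ha : a ≠ 0)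
    (u : TDist (Euc n)) (hu : SuppIn u ({0} : Set (Euc n)))
    (hhom : ∀ (t : ℝ) (ht : 0 < t) (φ : SchwartzMap (Euc n) ℝ),
      u (dilateCLM t ht φ) = t ^ a * u φ) :
    ∃ v : Fin n → TDist (Euc n),
      (∀ i : Fin n, SuppIn (v i) ({0} : Set (Euc n))) ∧
      u = ∑ i : Fin n, pDeriv n i (v i) := by
  have ht₀ : (0 : ℝ) < 1 / 2 := by norm_num
  have ht₁ : (1 : ℝ) / 2 ≤ 1 := by norm_num
  set r : ℝ := (1 / 2) ^ a
  have hr : 1 - r ≠ 0 := by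
    have : r ≠ (1 / 2) ^ (0 : ℝ) :=
      (Real.rpow_right_inj ht₀ (by norm_num)).not.2 ha
    rw [Real.rpow_zero] at this
    exact sub_ne_zero.2 this.symm
  let T : Fin n → 𝓢(Euc n, ℝ) →L[ℝ] 𝓢(Euc n, ℝ) := fun i ↦
    smulLeftCLM ℝ (fun x : Euc n ↦ x i) ∘L dilateAverageCLM (1 / 2) ht₀ ht₁
  refine ⟨fun i ↦ -(1 - r)⁻¹ • u ∘L T i, fun i ψ hψ ↦ ?_, ?_⟩
  · exact smul_eq_zero_of_right (-(1 - r)⁻¹)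
      (hu.comp_smulLeftCLM_coord_dilateAverageCLM i ht₀ ht₁ ψ hψ)
  · ext φ
    have key := congrArg u
      (sub_dilateCLM_eq_sum_coord_smul_dilateAverageCLM (1 / 2) ht₀ ht₁ φ)
    rw [map_sub, hhom, map_sum] at key
    simp only [pDeriv, dirDeriv, ContinuousLinearMap.smul_comp, Finset.sum_neg_distrib,
      neg_apply, sum_apply, smul_apply, ContinuousLinearMap.comp_apply, T,
      LineDeriv.lineDerivOpCLM_apply, smul_eq_mul, neg_mul, ← Finset.mul_sum, neg_neg]
    rw [eq_inv_mul_iff_mul_eq₀ hr, ← key]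
    ring

/-- A tempered distribution on `ℝⁿ` (`n ≥ 1`) supported in `{0}` which is homogeneous with
nonzero scaling exponent `a` (i.e. `u(φ(t·)) = t^a u(φ)` for `t > 0`) is a sum of first
derivatives of tempered distributions supported in `{0}`. -/
theorem homogeneous_dist_at_origin_is_exact (n : ℕ) (hn : 1 ≤ n) (a : ℝ) (ha : a ≠ 0)
    (u : TDist (Euc n)) (hu : SuppIn u ({0} : Set (Euc n)))
    (hhom : ∀ (t : ℝ) (ht : 0 < t) (φ : SchwartzMap (Euc n) ℝ),
      u (dilateCLM t ht φ) = t ^ a * u φ) :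
    ∃ v : Fin n → TDist (Euc n),
      (∀ i : Fin n, SuppIn (v i) ({0} : Set (Euc n))) ∧
      u = ∑ i : Fin n, pDeriv n i (v i) :=
  homogeneous_dist_at_origin_is_exact_general n a ha u hu hhom
end
end

section
/- Let n ≥ 1. For every tempered distribution u on ℝⁿ there exist tempered distributions v₁, …, vₙ on ℝⁿ such that u = Σ_{i=1}^{n} ∂ᵢvᵢ; that is, every tempered distribution on ℝⁿ is a distributional divergence (top-degree exactness of the tempered de Rham complex on ℝⁿ). -/
open MeasureTheory SchwartzMap

noncomputable section

/-!
For a unit vector `e`, integrating `∂ₑφ` along the ray from `x` in whichever of the directions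
`±e` points away from the origin gives `(1 + ‖x‖)^k ‖φ x‖ ≤ π sup_y (1 + ‖y‖)^(k+2) ‖∂ₑφ y‖`.
Since `∂ₑ` commutes with all derivatives, every Schwartz seminorm of `φ` is therefore bounded by
a Schwartz seminorm of `∂ₑφ`. Hence `∂ₑφ ↦ -u φ` is a well-defined functional on the range of
`∂ₑ`, dominated by a continuous seminorm, and Hahn–Banach extends it to a tempered distribution
`v` with `∂ₑv = u`. Taking `e` the first basis vector, `u = ∂₁v` is a divergence.
-/

open LineDeriv Filter Real Set
open scoped RealInnerProductSpace

section Ray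

variable {E : Type*} [NormedAddCommGroup E]

theorem tendsto_add_smul_atTop_cobounded [NormedSpace ℝ E] (x : E) {d : E} (hd : d ≠ 0) :
    Tendsto (fun t : ℝ => x + t • d) atTop (Bornology.cobounded E) := by
  refine (tendsto_const_add_cobounded x).comp (tendsto_norm_atTop_iff_cobounded.1 ?_)
  simpa [norm_smul] using tendsto_abs_atTop_atTop.atTop_mul_const (norm_pos_iff.2 hd)

variable [InnerProductSpace ℝ E] {x d : E} {t : ℝ}

theorem norm_le_norm_add_smul_of_inner_nonneg (hxd : 0 ≤ ⟪x, d⟫) (ht : 0 ≤ t) :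
    ‖x‖ ≤ ‖x + t • d‖ := by
  have : ‖x‖ ^ 2 ≤ ‖x + t • d‖ ^ 2 := by
    rw [norm_add_sq_real, real_inner_smul_right, norm_smul]
    nlinarith [mul_nonneg ht hxd, sq_nonneg (‖t‖ * ‖d‖)]
  exact (sq_le_sq₀ (norm_nonneg _) (norm_nonneg _)).1 this

theorem le_norm_add_smul_of_inner_nonneg (hd : ‖d‖ = 1) (hxd : 0 ≤ ⟪x, d⟫) :
    t ≤ ‖x + t • d‖ :=
  calc t ≤ ⟪x, d⟫ + t := le_add_of_nonneg_left hxd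
    _ = ⟪x + t • d, d⟫ := by simp [inner_add_left, real_inner_smul_left, hd]
    _ ≤ ‖x + t • d‖ := by simpa [hd] using real_inner_le_norm (x + t • d) d

end Ray

namespace SchwartzMap

variable {E F : Type*} [NormedAddCommGroup E] [NormedAddCommGroup F] [NormedSpace ℝ F]

section NormedSpace

variable [NormedSpace ℝ E]

theorem lineDerivOp_comm (a b : E) (f : 𝓢(E, F)) : ∂_{a} (∂_{b} f) = ∂_{b} (∂_{a} f) := by
  have hsymm (x : E) : IsSymmSndFDerivAt ℝ f x :=
    (f.smooth 2).contDiffAt.isSymmSndFDerivAt (by simp [minSmoothness_of_isRCLikeNormedField])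
  have hsecond (c d x : E) : ∂_{c} (∂_{d} f) x = fderiv ℝ (fderiv ℝ f) x c d := by
    have h := ((fderivCLM ℝ E F f).hasFDerivAt x).clm_apply (hasFDerivAt_const d x)
    simp only [fderivCLM_apply, ContinuousLinearMap.comp_zero, zero_add] at h
    exact congr($(h.fderiv) c)
  ext x
  rw [hsecond, hsecond, hsymm x]

theorem lineDerivOp_iteratedLineDerivOp_comm {n : ℕ} (e : E) (v : Fin n → E) (f : 𝓢(E, F)) :
    ∂_{e} (∂^{v} f) = ∂^{v} (∂_{e} f) := by
  induction n with
  | zero => simp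
  | succ n ih =>
    rw [iteratedLineDerivOp_succ_left, iteratedLineDerivOp_succ_left, lineDerivOp_comm, ih]

theorem tendsto_cobounded (f : 𝓢(E, F)) : Tendsto f (Bornology.cobounded E) (nhds 0) := by
  refine ((f.isBigO_cocompact_zpow_neg_nat 1).mono Metric.cobounded_le_cocompact).trans_tendsto ?_
  exact tendsto_norm_cobounded_atTop.inv_tendsto_atTop.congr fun x => by simp

theorem integral_Ioi_lineDerivOp_add_smul [CompleteSpace F] (f : 𝓢(E, F)) (x : E) {d : E}
    (hd : d ≠ 0) (hint : IntegrableOn (fun t : ℝ => ∂_{d} f (x + t • d)) (Ioi 0)) :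
    ∫ t in Ioi (0 : ℝ), ∂_{d} f (x + t • d) = -f x := by
  have hderiv (t : ℝ) : HasDerivAt (fun t : ℝ => f (x + t • d)) (∂_{d} f (x + t • d)) t := by
    have hline : HasDerivAt (fun t : ℝ => x + t • d) d t := by
      simpa using ((hasDerivAt_id t).smul_const d).const_add x
    exact (f.hasFDerivAt (x + t • d)).comp_hasDerivAt t hline
  have hlim := f.tendsto_cobounded.comp (tendsto_add_smul_atTop_cobounded x hd)
  simpa using integral_Ioi_of_hasDerivAt_of_tendsto' (fun t _ => hderiv t) hint hlim

end NormedSpace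

section InnerProductSpace

variable [InnerProductSpace ℝ E] [CompleteSpace F]

theorem one_add_norm_pow_mul_norm_le_of_inner_nonneg (f : 𝓢(E, F)) {x d : E} (hd : ‖d‖ = 1)
    (hxd : 0 ≤ ⟪x, d⟫) (k : ℕ) {S : ℝ} (hS : ∀ y, (1 + ‖y‖) ^ (k + 2) * ‖∂_{d} f y‖ ≤ S) :
    (1 + ‖x‖) ^ k * ‖f x‖ ≤ π * S := by
  set w := (1 + ‖x‖) ^ k
  set g : ℝ → F := fun t => ∂_{d} f (x + t • d)
  have hw : 1 ≤ w := one_le_pow₀ (le_add_of_nonneg_right (norm_nonneg x))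
  have hS0 : 0 ≤ S := (by positivity : (0 : ℝ) ≤ _).trans (hS x)
  -- On the ray `‖x + t • d‖ ≥ max ‖x‖ t`, so the weight at `x + t • d` dominates `w * (1 + t ^ 2)`.
  have hpt (t : ℝ) (ht : t ∈ Ioi 0) : w * ‖g t‖ ≤ S * (1 + t ^ 2)⁻¹ := by
    have hxy := norm_le_norm_add_smul_of_inner_nonneg hxd (le_of_lt ht)
    have hty := le_norm_add_smul_of_inner_nonneg (t := t) hd hxd
    set y := x + t • d
    have hwy : w ≤ (1 + ‖y‖) ^ k := pow_le_pow_left₀ (by positivity) (by linarith) k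
    have hsq : 1 + t ^ 2 ≤ (1 + ‖y‖) ^ 2 := by nlinarith [mem_Ioi.1 ht]
    rw [← div_eq_mul_inv, le_div_iff₀ (by positivity)]
    calc w * ‖g t‖ * (1 + t ^ 2) ≤ (1 + ‖y‖) ^ k * (1 + ‖y‖) ^ 2 * ‖g t‖ := by
          rw [mul_right_comm]; gcongr
      _ ≤ S := by rw [← pow_add]; exact hS y
  have hdom : IntegrableOn (fun t : ℝ => S * (1 + t ^ 2)⁻¹) (Ioi 0) :=
    (integrable_inv_one_add_sq.const_mul S).integrableOn
  have hint : IntegrableOn g (Ioi 0) := by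
    refine hdom.mono' ((∂_{d} f).continuous.comp (by fun_prop)).aestronglyMeasurable ?_
    filter_upwards [ae_restrict_mem measurableSet_Ioi] with t ht
    exact (le_mul_of_one_le_left (norm_nonneg _) hw).trans (hpt t ht)
  calc w * ‖f x‖ = w * ‖∫ t in Ioi 0, g t‖ := by
        rw [integral_Ioi_lineDerivOp_add_smul f x (norm_ne_zero_iff.1 (hd ▸ one_ne_zero)) hint,
          norm_neg]
    _ ≤ w * ∫ t in Ioi 0, ‖g t‖ := by gcongr; exact norm_integral_le_integral_norm _
    _ = ∫ t in Ioi 0, w * ‖g t‖ := (integral_const_mul _ _).symm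
    _ ≤ ∫ t in Ioi (0 : ℝ), S * (1 + t ^ 2)⁻¹ :=
        setIntegral_mono_on (hint.norm.const_mul _) hdom measurableSet_Ioi hpt
    _ = S * (π / 2) := by
        rw [integral_const_mul, integral_Ioi_inv_one_add_sq, arctan_zero, sub_zero]
    _ ≤ π * S := by nlinarith [pi_pos]

theorem one_add_norm_pow_mul_norm_le (f : 𝓢(E, F)) {e : E} (he : ‖e‖ = 1) (x : E) (k : ℕ) {S : ℝ}
    (hS : ∀ y, (1 + ‖y‖) ^ (k + 2) * ‖∂_{e} f y‖ ≤ S) :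
    (1 + ‖x‖) ^ k * ‖f x‖ ≤ π * S := by
  rcases le_total 0 ⟪x, e⟫ with hxe | hxe
  · exact f.one_add_norm_pow_mul_norm_le_of_inner_nonneg he hxe k hS
  · refine f.one_add_norm_pow_mul_norm_le_of_inner_nonneg (d := -e) (by simpa) (by simpa) k ?_
    simpa [lineDerivOp_left_neg] using hS

theorem seminorm_le_lineDerivOp (f : 𝓢(E, F)) {e : E} (he : ‖e‖ = 1) {k m : ℕ} {N : ℕ × ℕ}
    (hk : k ≤ N.1) (hm : m ≤ N.2) :
    SchwartzMap.seminorm ℝ k m f ≤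
      π * (2 ^ (N.1 + 2) *
        (Finset.Iic (N.1 + 2, N.2)).sup (schwartzSeminormFamily ℝ E F) (∂_{e} f)) := by
  set g : 𝓢(E, F) := ∂_{e} f
  set S := 2 ^ (N.1 + 2) * (Finset.Iic (N.1 + 2, N.2)).sup (schwartzSeminormFamily ℝ E F) g
  refine seminorm_le_bound ℝ k m f (by positivity) fun x => ?_
  have hD : ‖iteratedFDeriv ℝ m f x‖ ≤ π * S / (1 + ‖x‖) ^ k := by
    refine ContinuousMultilinearMap.opNorm_le_bound (by positivity) fun v => ?_
    have := (∂^{v} f).one_add_norm_pow_mul_norm_le he x k (S := S * ∏ i, ‖v i‖) fun y => ?_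
    · rw [div_mul_eq_mul_div, le_div_iff₀ (by positivity), ← iteratedLineDerivOp_eq_iteratedFDeriv]
      linarith
    rw [lineDerivOp_iteratedLineDerivOp_comm, iteratedLineDerivOp_eq_iteratedFDeriv]
    calc (1 + ‖y‖) ^ (k + 2) * ‖iteratedFDeriv ℝ m g y v‖
        ≤ (1 + ‖y‖) ^ (k + 2) * ‖iteratedFDeriv ℝ m g y‖ * ∏ i, ‖v i‖ := by
          rw [mul_assoc]; gcongr; exact ContinuousMultilinearMap.le_opNorm _ v
      _ ≤ S * ∏ i, ‖v i‖ := by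
          gcongr
          exact one_add_le_sup_seminorm_apply (m := (N.1 + 2, N.2))
            (Nat.add_le_add_right hk 2) hm _ y
  calc ‖x‖ ^ k * ‖iteratedFDeriv ℝ m f x‖ ≤ (1 + ‖x‖) ^ k * (π * S / (1 + ‖x‖) ^ k) := by
        gcongr; linarith
    _ = π * S := by field_simp

end InnerProductSpace

end SchwartzMap

theorem LinearMap.exists_strongDual_comp_eq_of_abs_le {E F : Type*} [AddCommGroup E] [Module ℝ E]
    [AddCommGroup F] [Module ℝ F] [TopologicalSpace F] [PolynormableSpace ℝ F] (T : E →ₗ[ℝ] F)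
    (u : E →ₗ[ℝ] ℝ) {q : Seminorm ℝ F} (hq : Continuous q) (h : ∀ x, |u x| ≤ q (T x)) :
    ∃ v : StrongDual ℝ F, ∀ x, v (T x) = u x := by
  have hker : LinearMap.ker T ≤ LinearMap.ker u := fun x hx => by
    have := h x
    rw [LinearMap.mem_ker.1 hx, map_zero] at this
    exact LinearMap.mem_ker.2 (abs_nonpos_iff.1 this)
  let f : Module.Dual ℝ (LinearMap.range T) :=
    (T.ker.liftQ u hker) ∘ₗ T.quotKerEquivRange.symm.toLinearMap
  have hf (x : E) : f ⟨T x, LinearMap.mem_range_self T x⟩ = u x := by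
    simp [f, LinearMap.quotKerEquivRange_symm_apply_image]
  obtain ⟨v, hv, -⟩ := f.exists_continuous_extension_of_le_seminorm_real _ hq <| by
    rintro ⟨_, x, rfl⟩
    exact (le_abs_self _).trans (hf x ▸ h x)
  exact ⟨v, fun x => (hv _).trans (hf x)⟩

theorem SchwartzMap.exists_comp_lineDerivOp_eq {E F : Type*} [NormedAddCommGroup E]
    [InnerProductSpace ℝ E] [NormedAddCommGroup F] [NormedSpace ℝ F] [CompleteSpace F] {e : E}
    (he : ‖e‖ = 1) (u : StrongDual ℝ 𝓢(E, F)) :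
    ∃ v : StrongDual ℝ 𝓢(E, F), ∀ f, v (∂_{e} f) = u f := by
  obtain ⟨s, C, -, hC⟩ := Seminorm.bound_of_continuous (schwartz_withSeminorms ℝ E F)
    (u : 𝓢(E, F) →ₗ[ℝ] ℝ).toSeminorm u.continuous.norm
  set N := s.sup id
  let c : NNReal := ⟨C * (π * 2 ^ (N.1 + 2)), by positivity⟩
  refine (lineDerivOpCLM ℝ 𝓢(E, F) e).toLinearMap.exists_strongDual_comp_eq_of_abs_le
    u.toLinearMap (q := c • (Finset.Iic (N.1 + 2, N.2)).sup (schwartzSeminormFamily ℝ E F))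
    ((Seminorm.continuous_finsetSup fun i _ =>
      (schwartz_withSeminorms ℝ E F).continuous_seminorm i).const_smul c) fun f => ?_
  have hsub : s ⊆ Finset.Iic N := fun i hi => Finset.mem_Iic.2 (Finset.le_sup (f := id) hi)
  calc |u f| ≤ C * s.sup (schwartzSeminormFamily ℝ E F) f := hC f
    _ ≤ C * (Finset.Iic N).sup (schwartzSeminormFamily ℝ E F) f := by
        gcongr; exact Seminorm.le_def.1 (Finset.sup_mono hsub) f
    _ ≤ C * (π * (2 ^ (N.1 + 2) *
          (Finset.Iic (N.1 + 2, N.2)).sup (schwartzSeminormFamily ℝ E F) (∂_{e} f))) := by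
        gcongr
        refine Seminorm.finset_sup_apply_le (by positivity) fun i hi => ?_
        exact f.seminorm_le_lineDerivOp he (Finset.mem_Iic.1 hi).1 (Finset.mem_Iic.1 hi).2
    _ = C * (π * 2 ^ (N.1 + 2)) *
          (Finset.Iic (N.1 + 2, N.2)).sup (schwartzSeminormFamily ℝ E F) (∂_{e} f) := by ring
    _ = _ := rfl

theorem dirDeriv_surjective {V : Type} [NormedAddCommGroup V] [InnerProductSpace ℝ V] {e : V}
    (he : ‖e‖ = 1) : Function.Surjective (dirDeriv e) := by
  intro u
  obtain ⟨v, hv⟩ := SchwartzMap.exists_comp_lineDerivOp_eq he (-u)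
  exact ⟨v, by ext f; simp [dirDeriv, hv]⟩

/-- **Top-degree exactness.** Every tempered distribution on `ℝⁿ` (`n ≥ 1`) is a
distributional divergence: `u = ∑ᵢ ∂ᵢvᵢ` for some tempered distributions `v₁, …, vₙ`. -/
theorem every_tempered_dist_is_divergence (n : ℕ) (hn : 1 ≤ n) (u : TDist (Euc n)) :
    ∃ v : Fin n → TDist (Euc n), u = ∑ i : Fin n, pDeriv n i (v i) := by
  obtain ⟨v, rfl⟩ := dirDeriv_surjective
    (by simp : ‖EuclideanSpace.single (⟨0, hn⟩ : Fin n) (1 : ℝ)‖ = 1) u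
  refine ⟨Pi.single ⟨0, hn⟩ v, ?_⟩
  rw [Fintype.sum_eq_single ⟨0, hn⟩ fun i hi => by simp [hi, pDeriv, dirDeriv]]
  simp [pDeriv]
end
end
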